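/- Lemma (gsd step, case d = 1): if x ∈ [-1,1], x ≥ 0, and (a :: b :: tq) is a Gray code of x, then ((not b) :: tq) is a Gray code of 2x - 1, where 'not' swaps L and R. -/

import Mathlib

/-!
For `x ≥ 0` the tail of a Gray code of `x` codes `1 - 2x`. Since the rest of a Gray code of `y`
depends only on `|y|`, negating `y = 1 - 2x` into `2x - 1` merely swaps its first digit.
-/

/-- Gray-code digits: `none` is ⊥, `some false` is L, `some true` is R. -/
abbrev GDigit := Option Bool

def RD (a : GDigit) (x : ℝ) : Prop :=
  (x < 0 ∧ a = some false) ∨ (x > 0 ∧ a = some true) ∨ x = 0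

/-- `GrayRel q x`: `x` has infinite Gray code `q`, defined as the greatest
relation satisfying the unfolding
`R(a::q, x) ↔ -1 ≤ x ≤ 1 ∧ R_D(a,x) ∧ R(q, 1 - 2|x|)`. -/
def GrayRel (q : ℕ → GDigit) (x : ℝ) : Prop :=
  ∃ R : (ℕ → GDigit) → ℝ → Prop,
    (∀ q x, R q x →
      -1 ≤ x ∧ x ≤ 1 ∧ RD (q 0) x ∧ R (fun i => q (i + 1)) (1 - 2 * |x|)) ∧
    R q x

def consD (a : GDigit) (s : ℕ → GDigit) : ℕ → GDigit :=
  fun n => match n with | 0 => a | n + 1 => s n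

def notD : GDigit → GDigit
  | none => none
  | some b => some (!b)


lemma GrayRel.dest {q : ℕ → GDigit} {x : ℝ} (h : GrayRel q x) :
    -1 ≤ x ∧ x ≤ 1 ∧ RD (q 0) x ∧ GrayRel (fun i => q (i + 1)) (1 - 2 * |x|) := by
  obtain ⟨R, hR, hqx⟩ := h
  obtain ⟨hlo, hhi, hd, htail⟩ := hR q x hqx
  exact ⟨hlo, hhi, hd, R, hR, htail⟩

/-- Coinduction: the relation `GrayRel ∪ {(consD a s, x)}` is a post-fixed point. -/
lemma GrayRel.cons {a : GDigit} {s : ℕ → GDigit} {x : ℝ}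
    (hlo : -1 ≤ x) (hhi : x ≤ 1) (hd : RD a x) (hs : GrayRel s (1 - 2 * |x|)) :
    GrayRel (consD a s) x := by
  refine ⟨fun q' x' => GrayRel q' x' ∨ (q' = consD a s ∧ x' = x), ?_, Or.inr ⟨rfl, rfl⟩⟩
  rintro q' x' (hg | ⟨rfl, rfl⟩)
  · obtain ⟨hlo', hhi', hd', htail⟩ := hg.dest
    exact ⟨hlo', hhi', hd', Or.inl htail⟩
  · exact ⟨hlo, hhi, hd, Or.inl hs⟩

lemma RD.neg_notD {a : GDigit} {x : ℝ} (h : RD a x) : RD (notD a) (-x) := by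
  rcases h with ⟨hx, rfl⟩ | ⟨hx, rfl⟩ | rfl
  · exact Or.inr (Or.inl ⟨by linarith, rfl⟩)
  · exact Or.inl ⟨by linarith, rfl⟩
  · exact Or.inr (Or.inr neg_zero)

lemma GrayRel.neg_notD_head {q : ℕ → GDigit} {x : ℝ} (h : GrayRel q x) :
    GrayRel (consD (notD (q 0)) (fun i => q (i + 1))) (-x) := by
  obtain ⟨hlo, hhi, hd, htail⟩ := h.dest
  refine GrayRel.cons (by linarith) (by linarith) hd.neg_notD ?_
  rwa [abs_neg]

theorem gsd_step_one_general (x : ℝ) (q : ℕ → GDigit)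
    (hx : 0 ≤ x)
    (hg : GrayRel q x) :
    GrayRel (consD (notD (q 1)) (fun i => q (i + 2))) (2 * x - 1) := by
  obtain ⟨-, -, -, htail⟩ := hg.dest
  rw [abs_of_nonneg hx] at htail
  convert htail.neg_notD_head using 1
  ring

theorem gsd_step_one (x : ℝ) (q : ℕ → GDigit)
    (h1 : -1 ≤ x) (h2 : x ≤ 1) (hx : 0 ≤ x)
    (hg : GrayRel q x) :
    GrayRel (consD (notD (q 1)) (fun i => q (i + 2))) (2 * x - 1) :=
  gsd_step_one_general x q hx hg
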